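/- arXiv:2002.00031 — 2 statements merged into one kernel-verified Lean document; each statement's English description precedes it below -/
import Mathlib

section
/- Let g be a probability density compactly supported on a convex domain Y ⊆ ℝ^d with finite second moment, and let f_Θ be its translation-dilation transform with parameters Θ = (s_1,…,s_d, λ_1,…,λ_d). Then the squared quadratic Wasserstein distance satisfies I(Θ) = W₂²(f_Θ, g) = Σ_{k=1}^d [ a_k (λ_k − 1)² + 2 b_k s_k (λ_k − 1) + s_k² ], where a_k = ∫_Y |⟨y,e_k⟩|² dν and b_k = ∫_Y ⟨y,e_k⟩ dν. -/
open MeasureTheory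
open scoped ENNReal

/-- The squared quadratic Wasserstein distance, defined as the infimum of the
quadratic transport cost over all couplings of the two measures. -/
noncomputable def W2sq {E : Type*} [MeasurableSpace E] [NormedAddCommGroup E]
    (μ ν : Measure E) : ℝ≥0∞ :=
  ⨅ π ∈ {π : Measure (E × E) | π.map Prod.fst = μ ∧ π.map Prod.snd = ν},
    ∫⁻ p, (‖p.1 - p.2‖₊ : ℝ≥0∞) ^ 2 ∂π

/-!
The affine map `S y = s + diag(λ) y` pushes `ν = g(y) dy` forward to `f_Θ(x) dx`, so the
coupling `(S, id)_* ν` bounds `W₂²` from above by `∫ ‖S y - y‖² dν`. Conversely, completing the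
square gives quadratic Kantorovich potentials
`φ x = ∑ (x_k² - (x_k - s_k)² / λ_k)` and `ψ y = ∑ ((1 - λ_k) y_k² - 2 s_k y_k)`:
the defect `‖x - y‖² - φ x - ψ y = ∑ (x_k - s_k - λ_k y_k)² / λ_k` is nonnegative because
`λ_k > 0` and vanishes on the graph of `S`, so every coupling costs at least
`∫ φ d(S_* ν) + ∫ ψ dν = ∫ ‖S y - y‖² dν`. The closed form is the expansion of
`‖S y - y‖² = ∑ ((λ_k - 1) y_k + s_k)²` in the first and second moments of `ν`.
-/

section

variable {α β : Type*} [MeasurableSpace α] [MeasurableSpace β]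

theorem ofReal_integral_le_lintegral_ofReal {μ : Measure α} {f : α → ℝ} (hf : Integrable f μ) :
    ENNReal.ofReal (∫ x, f x ∂μ) ≤ ∫⁻ x, ENNReal.ofReal (f x) ∂μ := by
  refine ENNReal.ofReal_le_of_le_toReal ?_
  rw [integral_eq_lintegral_pos_part_sub_lintegral_neg_part hf]
  exact sub_le_self _ ENNReal.toReal_nonneg

/-- Weak Kantorovich duality. -/
theorem ofReal_integral_add_integral_le_lintegral {μ : Measure α} {ν : Measure β}
    {π : Measure (α × β)} (hπ₁ : π.map Prod.fst = μ) (hπ₂ : π.map Prod.snd = ν)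
    {φ : α → ℝ} {ψ : β → ℝ} (hφ : Integrable φ μ) (hψ : Integrable ψ ν)
    {c : α × β → ℝ≥0∞} (hc : ∀ p, ENNReal.ofReal (φ p.1 + ψ p.2) ≤ c p) :
    ENNReal.ofReal (∫ x, φ x ∂μ + ∫ y, ψ y ∂ν) ≤ ∫⁻ p, c p ∂π := by
  subst hπ₁ hπ₂
  have hφ' : Integrable (fun p : α × β => φ p.1) π := hφ.comp_measurable measurable_fst
  have hψ' : Integrable (fun p : α × β => ψ p.2) π := hψ.comp_measurable measurable_snd
  rw [integral_map measurable_fst.aemeasurable hφ.aestronglyMeasurable,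
    integral_map measurable_snd.aemeasurable hψ.aestronglyMeasurable, ← integral_add hφ' hψ']
  exact (ofReal_integral_le_lintegral_ofReal (hφ'.add hψ')).trans (lintegral_mono hc)

theorem MeasurableEquiv.map_withDensity (e : α ≃ᵐ β) (μ : Measure α) (f : α → ℝ≥0∞) :
    (μ.withDensity f).map e = (μ.map e).withDensity (f ∘ e.symm) := by
  ext A hA
  rw [e.map_apply, withDensity_apply _ hA, withDensity_apply _ (e.measurable hA), e.restrict_map,
    lintegral_map_equiv]
  simp

variable {μ : Measure α} {g : α → ℝ}

theorem isProbabilityMeasure_withDensity_ofReal (hg : 0 ≤ᵐ[μ] g) (hg_one : ∫ x, g x ∂μ = 1) :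
    IsProbabilityMeasure (μ.withDensity fun x => ENNReal.ofReal (g x)) := by
  constructor
  rw [withDensity_apply _ MeasurableSet.univ, Measure.restrict_univ,
    ← ofReal_integral_eq_lintegral_ofReal (.of_integral_ne_zero (by simp [hg_one])) hg, hg_one,
    ENNReal.ofReal_one]

theorem integral_withDensity_ofReal (hg_meas : AEMeasurable g μ) (hg : 0 ≤ᵐ[μ] g) (φ : α → ℝ) :
    ∫ x, φ x ∂μ.withDensity (fun x => ENNReal.ofReal (g x)) = ∫ x, φ x * g x ∂μ := by
  rw [integral_withDensity_eq_integral_toReal_smul₀ hg_meas.ennreal_ofReal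
    (ae_of_all _ fun _ => ENNReal.ofReal_lt_top)]
  refine integral_congr_ae (hg.mono fun x hx => ?_)
  simp only [ENNReal.toReal_ofReal hx, smul_eq_mul, mul_comm]

theorem integrable_withDensity_ofReal_iff (hg_meas : AEMeasurable g μ) (hg : 0 ≤ᵐ[μ] g)
    {φ : α → ℝ} :
    Integrable φ (μ.withDensity fun x => ENNReal.ofReal (g x))
      ↔ Integrable (fun x => φ x * g x) μ := by
  rw [integrable_withDensity_iff_integrable_smul₀' hg_meas.ennreal_ofReal
    (ae_of_all _ fun _ => ENNReal.ofReal_lt_top)]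
  refine integrable_congr (hg.mono fun x hx => ?_)
  simp only [ENNReal.toReal_ofReal hx, smul_eq_mul, mul_comm]

end

section

variable {E : Type*} [NormedAddCommGroup E]

theorem coe_nnnorm_sq_eq_ofReal_norm_sq (v : E) :
    (‖v‖₊ : ℝ≥0∞) ^ 2 = ENNReal.ofReal (‖v‖ ^ 2) := by
  rw [← enorm_eq_nnnorm, ← ofReal_norm, ← ENNReal.ofReal_pow (norm_nonneg _)]

variable [MeasurableSpace E]

theorem W2sq_map_le {T : E → E} (hT : Measurable T) (ν : Measure E) :
    W2sq (ν.map T) ν ≤ ∫⁻ y, (‖T y - y‖₊ : ℝ≥0∞) ^ 2 ∂ν := by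
  have hTid : Measurable fun y => (T y, y) := hT.prodMk measurable_id
  refine (iInf₂_le (ν.map fun y => (T y, y)) ⟨?_, ?_⟩).trans (lintegral_map_le _ _)
  · rw [Measure.map_map measurable_fst hTid]; rfl
  · rw [Measure.map_map measurable_snd hTid]; exact Measure.map_id

theorem le_W2sq_of_add_le_norm_sub_sq {μ ν : Measure E} {φ ψ : E → ℝ}
    (hφ : Integrable φ μ) (hψ : Integrable ψ ν) (hle : ∀ x y, φ x + ψ y ≤ ‖x - y‖ ^ 2) :
    ENNReal.ofReal (∫ x, φ x ∂μ + ∫ y, ψ y ∂ν) ≤ W2sq μ ν := by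
  refine le_iInf₂ fun π ⟨hπ₁, hπ₂⟩ => ofReal_integral_add_integral_le_lintegral hπ₁ hπ₂ hφ hψ
    fun p => ?_
  rw [coe_nnnorm_sq_eq_ofReal_norm_sq]
  exact ENNReal.ofReal_le_ofReal (hle p.1 p.2)

end

namespace EuclideanSpace

variable {ι : Type*}

noncomputable def translateDilate (s lam : ι → ℝ) (y : EuclideanSpace ℝ ι) :
    EuclideanSpace ℝ ι :=
  WithLp.toLp 2 fun k => s k + lam k * y k

@[simp]
theorem translateDilate_apply (s lam : ι → ℝ) (y : EuclideanSpace ℝ ι) (k : ι) :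
    translateDilate s lam y k = s k + lam k * y k := rfl

theorem continuous_translateDilate (s lam : ι → ℝ) : Continuous (translateDilate s lam) := by
  unfold translateDilate
  fun_prop

variable [Fintype ι]

noncomputable def translateDilateEquiv (s lam : ι → ℝ) (hlam : ∀ k, lam k ≠ 0) :
    EuclideanSpace ℝ ι ≃ᵐ EuclideanSpace ℝ ι where
  toFun := translateDilate s lam
  invFun x := WithLp.toLp 2 fun k => (x k - s k) / lam k
  left_inv y := by ext k; simp [hlam k]
  right_inv x := by ext k; simp [mul_div_cancel₀ _ (hlam k)]
  measurable_toFun := (continuous_translateDilate s lam).measurable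
  measurable_invFun :=
    (by fun_prop : Continuous fun x : EuclideanSpace ℝ ι =>
      WithLp.toLp 2 fun k => (x k - s k) / lam k).measurable

theorem map_translateDilate_volume {s lam : ι → ℝ} (hlam : ∀ k, 0 < lam k) :
    (volume : Measure (EuclideanSpace ℝ ι)).map (translateDilate s lam)
      = (ENNReal.ofReal (∏ k, lam k))⁻¹ • volume := by
  classical
  have hD : translateDilate s lam
      = (WithLp.toLp 2 s + ·) ∘ Matrix.toLpLin 2 2 (Matrix.diagonal lam) := by
    ext y k
    simp [Matrix.toLpLin_apply, Matrix.mulVec_diagonal]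
  have hdet : LinearMap.det (Matrix.toLpLin 2 2 (Matrix.diagonal lam)) = ∏ k, lam k := by
    rw [LinearMap.det_toLpLin, Matrix.det_diagonal]
  have hpos : 0 < ∏ k, lam k := Finset.prod_pos fun k _ => hlam k
  rw [hD, ← Measure.map_map (measurable_const_add _)
      (LinearMap.continuous_of_finiteDimensional _).measurable,
    Measure.map_linearMap_addHaar_eq_smul_addHaar _ (by rw [hdet]; exact hpos.ne'),
    Measure.map_smul, Measure.IsAddLeftInvariant.map_add_left_eq_self, hdet, abs_inv,
    abs_of_pos hpos, ENNReal.ofReal_inv_of_pos hpos]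

theorem map_translateDilate_withDensity {s lam : ι → ℝ} (hlam : ∀ k, 0 < lam k)
    (f : EuclideanSpace ℝ ι → ℝ≥0∞) :
    (volume.withDensity f).map (translateDilate s lam)
      = volume.withDensity fun x =>
          (ENNReal.ofReal (∏ k, lam k))⁻¹ * f (WithLp.toLp 2 fun k => (x k - s k) / lam k) := by
  have hpos : 0 < ∏ k, lam k := Finset.prod_pos fun k _ => hlam k
  have h := (translateDilateEquiv s lam fun k => (hlam k).ne').map_withDensity volume f
  change (volume.withDensity f).map (translateDilate s lam)
    = (volume.map (translateDilate s lam)).withDensity _ at h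
  rw [h, map_translateDilate_volume hlam, withDensity_smul_measure,
    ← withDensity_smul' _ _ (ENNReal.inv_ne_top.2 (ENNReal.ofReal_pos.2 hpos).ne')]
  rfl

theorem norm_translateDilate_sub_sq (s lam : ι → ℝ) (y : EuclideanSpace ℝ ι) :
    ‖translateDilate s lam y - y‖ ^ 2
      = ∑ k, ((lam k - 1) ^ 2 * y k ^ 2 + 2 * s k * (lam k - 1) * y k + s k ^ 2) := by
  rw [EuclideanSpace.real_norm_sq_eq]
  refine Finset.sum_congr rfl fun k _ => ?_
  simp only [PiLp.sub_apply, translateDilate_apply]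
  ring

variable {ν : Measure (EuclideanSpace ℝ ι)}

theorem integrable_apply_sq (hν : Integrable (fun y => ‖y‖ ^ 2) ν) (k : ι) :
    Integrable (fun y => y k ^ 2) ν := by
  refine hν.mono' (by fun_prop) (ae_of_all _ fun y => ?_)
  rw [Real.norm_of_nonneg (sq_nonneg _), EuclideanSpace.real_norm_sq_eq]
  exact Finset.single_le_sum (fun i _ => sq_nonneg (y i)) (Finset.mem_univ k)

theorem integrable_apply [IsFiniteMeasure ν] (hν : Integrable (fun y => ‖y‖ ^ 2) ν) (k : ι) :
    Integrable (fun y => y k) ν := by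
  refine ((integrable_apply_sq hν k).add (integrable_const 1)).mono' (by fun_prop)
    (ae_of_all _ fun y => ?_)
  change |y k| ≤ y k ^ 2 + 1
  nlinarith [abs_nonneg (y k), sq_abs (y k)]

theorem integrable_coord_quadratic [IsFiniteMeasure ν]
    (hν : Integrable (fun y => ‖y‖ ^ 2) ν) (a b c : ℝ) (k : ι) :
    Integrable (fun y => a * y k ^ 2 + b * y k + c) ν := by
  have := integrable_apply_sq hν k
  have := integrable_apply hν k
  fun_prop

theorem integral_sum_coord_quadratic [IsFiniteMeasure ν]
    (hν : Integrable (fun y => ‖y‖ ^ 2) ν) (α β γ : ι → ℝ) :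
    ∫ y, ∑ k, (α k * y k ^ 2 + β k * y k + γ k) ∂ν
      = ∑ k, (α k * ∫ y, y k ^ 2 ∂ν + β k * ∫ y, y k ∂ν + γ k * ν.real Set.univ) := by
  rw [integral_finsetSum _ fun k _ => integrable_coord_quadratic hν _ _ _ k]
  refine Finset.sum_congr rfl fun k _ => ?_
  have hsq := (integrable_apply_sq hν k).const_mul (α k)
  have hlin := (integrable_apply hν k).const_mul (β k)
  rw [integral_add (hsq.fun_add hlin) (integrable_const _), integral_add hsq hlin,
    integral_const_mul, integral_const_mul, integral_const, smul_eq_mul, mul_comm (γ k)]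

theorem integrable_norm_translateDilate_sub_sq [IsFiniteMeasure ν]
    (hν : Integrable (fun y => ‖y‖ ^ 2) ν) (s lam : ι → ℝ) :
    Integrable (fun y => ‖translateDilate s lam y - y‖ ^ 2) ν := by
  simp_rw [norm_translateDilate_sub_sq]
  exact integrable_finsetSum _ fun k _ => integrable_coord_quadratic hν _ _ _ k

theorem ofReal_integral_le_W2sq_map_translateDilate [IsFiniteMeasure ν]
    (hν : Integrable (fun y => ‖y‖ ^ 2) ν) {s lam : ι → ℝ} (hlam : ∀ k, 0 < lam k) :
    ENNReal.ofReal (∫ y, ‖translateDilate s lam y - y‖ ^ 2 ∂ν)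
      ≤ W2sq (ν.map (translateDilate s lam)) ν := by
  set S := translateDilate s lam
  let φ : EuclideanSpace ℝ ι → ℝ := fun x => ∑ k, (x k ^ 2 - (x k - s k) ^ 2 / lam k)
  let ψ : EuclideanSpace ℝ ι → ℝ := fun y => ∑ k, ((1 - lam k) * y k ^ 2 - 2 * s k * y k)
  have hsplit : ∀ x y,
      ‖x - y‖ ^ 2 = φ x + ψ y + ∑ k, (x k - s k - lam k * y k) ^ 2 / lam k := by
    intro x y
    simp only [EuclideanSpace.real_norm_sq_eq, φ, ψ, ← Finset.sum_add_distrib]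
    refine Finset.sum_congr rfl fun k _ => ?_
    have := (hlam k).ne'
    simp only [PiLp.sub_apply]
    field_simp
    ring
  have hle : ∀ x y, φ x + ψ y ≤ ‖x - y‖ ^ 2 := fun x y => by
    rw [hsplit]
    exact le_add_of_nonneg_right
      (Finset.sum_nonneg fun k _ => div_nonneg (sq_nonneg _) (hlam k).le)
  have hgraph : ∀ y, φ (S y) + ψ y = ‖S y - y‖ ^ 2 := fun y => by
    simp [hsplit, S]
  have hψ : Integrable ψ ν := integrable_finsetSum _ fun k _ => by
    have := integrable_apply_sq hν k
    have := integrable_apply hν k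
    fun_prop
  have hφS : Integrable (fun y => φ (S y)) ν :=
    ((integrable_norm_translateDilate_sub_sq hν s lam).sub hψ).congr
      (ae_of_all _ fun y => by
        change ‖S y - y‖ ^ 2 - ψ y = φ (S y)
        rw [← hgraph]
        ring)
  have hφc : Continuous φ := by fun_prop
  have hSc : Continuous S := continuous_translateDilate s lam
  have hφ : Integrable φ (ν.map S) :=
    (integrable_map_measure hφc.aestronglyMeasurable hSc.aemeasurable).2 hφS
  calc ENNReal.ofReal (∫ y, ‖S y - y‖ ^ 2 ∂ν)
      = ENNReal.ofReal (∫ x, φ x ∂ν.map S + ∫ y, ψ y ∂ν) := by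
        rw [integral_map hSc.aemeasurable hφc.aestronglyMeasurable, ← integral_add hφS hψ]
        simp_rw [hgraph]
    _ ≤ W2sq (ν.map S) ν := le_W2sq_of_add_le_norm_sub_sq hφ hψ hle

theorem W2sq_map_translateDilate [IsFiniteMeasure ν]
    (hν : Integrable (fun y => ‖y‖ ^ 2) ν) {s lam : ι → ℝ} (hlam : ∀ k, 0 < lam k) :
    W2sq (ν.map (translateDilate s lam)) ν
      = ENNReal.ofReal (∫ y, ‖translateDilate s lam y - y‖ ^ 2 ∂ν) := by
  refine le_antisymm ?_ (ofReal_integral_le_W2sq_map_translateDilate hν hlam)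
  calc W2sq (ν.map (translateDilate s lam)) ν
      ≤ ∫⁻ y, (‖translateDilate s lam y - y‖₊ : ℝ≥0∞) ^ 2 ∂ν :=
        W2sq_map_le (continuous_translateDilate s lam).measurable ν
    _ = ENNReal.ofReal (∫ y, ‖translateDilate s lam y - y‖ ^ 2 ∂ν) := by
        rw [ofReal_integral_eq_lintegral_ofReal (integrable_norm_translateDilate_sub_sq hν s lam)
          (ae_of_all _ fun _ => sq_nonneg _)]
        simp_rw [coe_nnnorm_sq_eq_ofReal_norm_sq]

end EuclideanSpace

theorem W2sq_translation_dilation_formula_general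
    (d : ℕ) (g : EuclideanSpace ℝ (Fin d) → ℝ)
    (hg_meas : Measurable g) (hg_nonneg : ∀ x, 0 ≤ g x)
    (hg_prob : ∫ x, g x = 1)
    (hg_mom : Integrable (fun x => ‖x‖ ^ 2 * g x))
    (s : Fin d → ℝ) (lam : Fin d → ℝ) (hlam : ∀ k, 0 < lam k)
    (fΘ : EuclideanSpace ℝ (Fin d) → ℝ)
    (hf : ∀ x, fΘ x = (∏ k, (lam k)⁻¹) * g (WithLp.toLp 2 (fun k => (x k - s k) / lam k)))
    (a b : Fin d → ℝ)
    (ha : ∀ k, a k = ∫ y, |y k| ^ 2 * g y)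
    (hb : ∀ k, b k = ∫ y, y k * g y) :
    W2sq (volume.withDensity (fun x => ENNReal.ofReal (fΘ x)))
        (volume.withDensity (fun x => ENNReal.ofReal (g x)))
      = ENNReal.ofReal
          (∑ k, (a k * (lam k - 1) ^ 2 + 2 * b k * s k * (lam k - 1) + s k ^ 2)) := by
  have hg := ae_of_all volume hg_nonneg
  have := isProbabilityMeasure_withDensity_ofReal hg hg_prob
  have hmom := (integrable_withDensity_ofReal_iff hg_meas.aemeasurable hg).2 hg_mom
  have hpush : volume.withDensity (fun x => ENNReal.ofReal (fΘ x))
      = (volume.withDensity fun x => ENNReal.ofReal (g x)).map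
          (EuclideanSpace.translateDilate s lam) := by
    have hpos : 0 < ∏ k, lam k := Finset.prod_pos fun k _ => hlam k
    rw [EuclideanSpace.map_translateDilate_withDensity hlam]
    congr 1
    funext x
    rw [hf, Finset.prod_inv_distrib, ENNReal.ofReal_mul (inv_pos.2 hpos).le,
      ENNReal.ofReal_inv_of_pos hpos]
  rw [hpush, EuclideanSpace.W2sq_map_translateDilate hmom hlam]
  simp_rw [EuclideanSpace.norm_translateDilate_sub_sq]
  rw [EuclideanSpace.integral_sum_coord_quadratic hmom, probReal_univ]
  congr 1
  refine Finset.sum_congr rfl fun k _ => ?_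
  rw [ha, hb, integral_withDensity_ofReal hg_meas.aemeasurable hg,
    integral_withDensity_ofReal hg_meas.aemeasurable hg]
  simp only [sq_abs]
  ring

/-- closed form of `W₂²(f_Θ, g)` for the translation-dilation transform:
`W₂²(f_Θ,g) = Σ_k [a_k (λ_k−1)² + 2 b_k s_k (λ_k−1) + s_k²]` with
`a_k = ∫ |⟨y,e_k⟩|² dν`, `b_k = ∫ ⟨y,e_k⟩ dν`. -/
theorem W2sq_translation_dilation_formula
    (d : ℕ) (g : EuclideanSpace ℝ (Fin d) → ℝ)
    (Y : Set (EuclideanSpace ℝ (Fin d)))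
    (hY : Convex ℝ Y) (hY_cpt : IsCompact Y)
    (hg_meas : Measurable g) (hg_nonneg : ∀ x, 0 ≤ g x)
    (hg_prob : ∫ x, g x = 1)
    (hg_mom : Integrable (fun x => ‖x‖ ^ 2 * g x))
    (hg_supp : Function.support g ⊆ Y)
    (s : Fin d → ℝ) (lam : Fin d → ℝ) (hlam : ∀ k, 0 < lam k)
    (fΘ : EuclideanSpace ℝ (Fin d) → ℝ)
    (hf : ∀ x, fΘ x = (∏ k, (lam k)⁻¹) * g (WithLp.toLp 2 (fun k => (x k - s k) / lam k)))
    (a b : Fin d → ℝ)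
    (ha : ∀ k, a k = ∫ y, |y k| ^ 2 * g y)
    (hb : ∀ k, b k = ∫ y, y k * g y) :
    W2sq (volume.withDensity (fun x => ENNReal.ofReal (fΘ x)))
        (volume.withDensity (fun x => ENNReal.ofReal (g x)))
      = ENNReal.ofReal
          (∑ k, (a k * (lam k - 1) ^ 2 + 2 * b k * s k * (lam k - 1) + s k ^ 2)) :=
  W2sq_translation_dilation_formula_general d g hg_meas hg_nonneg hg_prob hg_mom s lam hlam fΘ hf a
    b ha hb
end

section
/- If f, g are strictly positive C^{k,α} probability densities on a bounded interval and T is the optimal map between them (T = G^{-1}∘F), then the Fréchet derivative H of W₂²(·, g) at f, characterized by dH/dt = 2(t − T(t)), satisfies H ∈ C^{k+2,α}; in particular the adjoint source gains one degree of smoothness over the data. -/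
open MeasureTheory intervalIntegral

/-- `f` is of class `C^{k,α}` on a set. -/
def CkHolderOn (k : ℕ) (α : NNReal) (f : ℝ → ℝ) (s : Set ℝ) : Prop :=
  ContDiffOn ℝ k f s ∧ ∃ C : NNReal, HolderOnWith C α (iteratedDerivWithin k f s) s

/-!
Since `H' = 2 (id - T)` with `T = G⁻¹ ∘ F`, it suffices to show that `T` is `C^{k+1,α}`.
The cumulative distribution functions `F` and `G` are primitives of `C^{k,α}` functions, hence
`C^{k+1,α}`. Because `G' = g ≥ min g > 0`, the inverse `G⁻¹` on `[0, 1]` is Lipschitz with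
derivative `1 / (g ∘ G⁻¹)`; since `C^{j,α}` on a compact interval is stable under sums, products,
reciprocals of functions bounded away from zero and composition with Lipschitz `C^{j,α}` maps,
induction on `j ≤ k + 1` bootstraps `G⁻¹` to `C^{k+1,α}`, and then so is `G⁻¹ ∘ F`.
The induction uses the recursive description of `C^{j,α}`: `C^{0,α}` means continuous and
`α`-Hölder, and `C^{j+1,α}` means differentiable with derivative in `C^{j,α}`.
-/

open Set Filter Topology
open scoped NNReal

section HolderOnWith

variable {X : Type*} [PseudoMetricSpace X] {s : Set X} {α C D : ℝ≥0}

theorem HolderOnWith.of_dist_le {Y : Type*} [PseudoMetricSpace Y] {f : X → Y}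
    (h : ∀ x ∈ s, ∀ y ∈ s, dist (f x) (f y) ≤ C * dist x y ^ (α : ℝ)) :
    HolderOnWith C α f s := by
  intro x hx y hy
  rw [edist_nndist, edist_nndist, ← ENNReal.coe_rpow_of_nonneg _ α.coe_nonneg, ← ENNReal.coe_mul,
    ENNReal.coe_le_coe, ← NNReal.coe_le_coe, NNReal.coe_mul, NNReal.coe_rpow, coe_nndist,
    coe_nndist]
  exact h x hx y hy

theorem HolderOnWith.congr {Y : Type*} [PseudoMetricSpace Y] {f g : X → Y}
    (hf : HolderOnWith C α f s) (hfg : EqOn f g s) : HolderOnWith C α g s := by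
  intro x hx y hy
  rw [← hfg hx, ← hfg hy]
  exact hf x hx y hy

theorem HolderOnWith.add {Y : Type*} [SeminormedAddCommGroup Y] {f g : X → Y}
    (hf : HolderOnWith C α f s) (hg : HolderOnWith D α g s) :
    HolderOnWith (C + D) α (f + g) s :=
  HolderWith.restrict_iff.mp <|
    (HolderWith.restrict_iff.mpr hf).add (HolderWith.restrict_iff.mpr hg)

theorem HolderOnWith.const_smul {Y : Type*} [SeminormedAddCommGroup Y] [NormedSpace ℝ Y]
    {f : X → Y} (c : ℝ) (hf : HolderOnWith C α f s) : HolderOnWith (C * ‖c‖₊) α (c • f) s :=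
  HolderWith.restrict_iff.mp <| (HolderWith.restrict_iff.mpr hf).smul c

variable {u v : X → ℝ}

theorem HolderOnWith.mul {A B : ℝ≥0} (hu : HolderOnWith C α u s) (hv : HolderOnWith D α v s)
    (hA : ∀ x ∈ s, |u x| ≤ A) (hB : ∀ x ∈ s, |v x| ≤ B) :
    HolderOnWith (A * D + B * C) α (u * v) s := by
  refine .of_dist_le fun x hx y hy => ?_
  have hdu := hu.dist_le hx hy
  have hdv := hv.dist_le hx hy
  simp only [Real.dist_eq, Pi.mul_apply] at hdu hdv ⊢
  calc |u x * v x - u y * v y| = |u x * (v x - v y) + v y * (u x - u y)| := by ring_nf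
    _ ≤ |u x| * |v x - v y| + |v y| * |u x - u y| := by
        rw [← abs_mul, ← abs_mul]; exact abs_add_le _ _
    _ ≤ A * (D * dist x y ^ (α : ℝ)) + B * (C * dist x y ^ (α : ℝ)) := by
        gcongr
        exacts [hA x hx, hB y hy]
    _ = ↑(A * D + B * C) * dist x y ^ (α : ℝ) := by push_cast; ring

theorem HolderOnWith.inv {c : ℝ≥0} (hc : 0 < c) (hu : HolderOnWith C α u s)
    (hlb : ∀ x ∈ s, c ≤ |u x|) : HolderOnWith (C / c ^ 2) α u⁻¹ s := by
  refine .of_dist_le fun x hx y hy => ?_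
  have hux : (c : ℝ) ≤ |u x| := hlb x hx
  have huy : (c : ℝ) ≤ |u y| := hlb y hy
  have hc' : (0 : ℝ) < c := hc
  have hdu := hu.dist_le hy hx
  rw [Real.dist_eq, dist_comm y x] at hdu
  rw [Pi.inv_apply, Pi.inv_apply, Real.dist_eq,
    inv_sub_inv (abs_pos.mp (hc'.trans_le hux)) (abs_pos.mp (hc'.trans_le huy)), abs_div, abs_mul]
  calc |u y - u x| / (|u x| * |u y|) ≤ C * dist x y ^ (α : ℝ) / (c * c) := by
        gcongr
    _ = ↑(C / c ^ 2) * dist x y ^ (α : ℝ) := by push_cast; ring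

end HolderOnWith

theorem LipschitzOnWith.holderOnWith_Icc {K α : ℝ≥0} {a b : ℝ} {f : ℝ → ℝ}
    (hf : LipschitzOnWith K f (Icc a b)) (hα : α ≤ 1) :
    ∃ C, HolderOnWith C α f (Icc a b) :=
  ⟨_, (holderOnWith_one.mpr hf).of_le (D := (b - a).toNNReal)
    (fun x hx y hy => by
      rw [edist_dist]; exact ENNReal.ofReal_le_ofReal (Real.dist_le_of_mem_Icc hx hy)) hα⟩

def IteratedHolderOn : ℕ → ℝ≥0 → (ℝ → ℝ) → Set ℝ → Prop
  | 0, α, u, s => ContinuousOn u s ∧ ∃ C, HolderOnWith C α u s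
  | k + 1, α, u, s => DifferentiableOn ℝ u s ∧ IteratedHolderOn k α (derivWithin u s) s

namespace IteratedHolderOn

variable {k : ℕ} {α : ℝ≥0} {u v : ℝ → ℝ} {s : Set ℝ}

theorem continuousOn (h : IteratedHolderOn k α u s) : ContinuousOn u s := by
  cases k with
  | zero => exact h.1
  | succ k => exact h.1.continuousOn

theorem congr (h : IteratedHolderOn k α u s) (huv : EqOn u v s) : IteratedHolderOn k α v s := by
  induction k generalizing u v with
  | zero =>
    obtain ⟨hcont, C, hC⟩ := h
    exact ⟨hcont.congr huv.symm, C, hC.congr huv⟩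
  | succ k ih =>
    exact ⟨fun x hx => (h.1 x hx).congr huv.symm (huv hx).symm,
      ih h.2 fun x hx => derivWithin_congr huv (huv hx)⟩

theorem iff_ckHolderOn (hs : UniqueDiffOn ℝ s) :
    IteratedHolderOn k α u s ↔ CkHolderOn k α u s := by
  induction k generalizing u with
  | zero => simp [IteratedHolderOn, CkHolderOn]
  | succ k ih =>
    rw [IteratedHolderOn, ih, CkHolderOn, CkHolderOn, Nat.cast_succ,
      contDiffOn_succ_iff_derivWithin hs, iteratedDerivWithin_succ']
    simp [and_assoc]

theorem of_hasDerivWithinAt {u' : ℝ → ℝ} (hs : UniqueDiffOn ℝ s)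
    (hu : ∀ x ∈ s, HasDerivWithinAt u (u' x) s x) (hu' : IteratedHolderOn k α u' s) :
    IteratedHolderOn (k + 1) α u s :=
  ⟨fun x hx => (hu x hx).differentiableWithinAt,
    hu'.congr fun x hx => ((hu x hx).derivWithin (hs x hx)).symm⟩

theorem _root_.iteratedHolderOn_const (k : ℕ) (c : ℝ) : IteratedHolderOn k α (fun _ => c) s := by
  induction k generalizing c with
  | zero => exact ⟨continuousOn_const, 0, HolderWith.const.holderOnWith s⟩
  | succ k ih => exact ⟨differentiableOn_const c, (ih 0).congr fun x _ => by simp⟩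

theorem add (hu : IteratedHolderOn k α u s) (hv : IteratedHolderOn k α v s) :
    IteratedHolderOn k α (fun x => u x + v x) s := by
  induction k generalizing u v with
  | zero => exact ⟨hu.1.add hv.1, _, hu.2.choose_spec.add hv.2.choose_spec⟩
  | succ k ih =>
    exact ⟨hu.1.add hv.1, (ih hu.2 hv.2).congr fun x hx =>
      (derivWithin_add (hu.1 x hx) (hv.1 x hx)).symm⟩

theorem const_mul (c : ℝ) (hu : IteratedHolderOn k α u s) :
    IteratedHolderOn k α (fun x => c * u x) s := by
  induction k generalizing u with
  | zero => exact ⟨hu.1.const_smul c, _, hu.2.choose_spec.const_smul c⟩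
  | succ k ih =>
    exact ⟨hu.1.const_mul c, (ih hu.2).congr fun x hx =>
      (derivWithin_const_mul c (hu.1 x hx)).symm⟩

variable {a b : ℝ}

theorem exists_lipschitzOnWith (h : IteratedHolderOn (k + 1) α u (Icc a b)) :
    ∃ K, LipschitzOnWith K u (Icc a b) := by
  obtain ⟨K, hK⟩ := isCompact_Icc.exists_bound_of_continuousOn h.2.continuousOn
  refine ⟨K.toNNReal, (convex_Icc a b).lipschitzOnWith_of_nnnorm_derivWithin_le h.1 fun x hx => ?_⟩
  rw [← NNReal.coe_le_coe, coe_nnnorm, Real.coe_toNNReal']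
  exact (hK x hx).trans (le_max_left _ _)

theorem of_succ (hα : α ≤ 1) (h : IteratedHolderOn (k + 1) α u (Icc a b)) :
    IteratedHolderOn k α u (Icc a b) := by
  induction k generalizing u with
  | zero => exact ⟨h.1.continuousOn, h.exists_lipschitzOnWith.choose_spec.holderOnWith_Icc hα⟩
  | succ k ih => exact ⟨h.1, ih h.2⟩

theorem of_le (hα : α ≤ 1) {l : ℕ} (hlk : l ≤ k) (h : IteratedHolderOn k α u (Icc a b)) :
    IteratedHolderOn l α u (Icc a b) := by
  induction hlk with
  | refl => exact h
  | step _ ih => exact ih (h.of_succ hα)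

theorem _root_.iteratedHolderOn_id (hα : α ≤ 1) (hab : a < b) (k : ℕ) :
    IteratedHolderOn k α (fun x => x) (Icc a b) :=
  of_succ hα <| of_hasDerivWithinAt (uniqueDiffOn_Icc hab)
    (fun x _ => hasDerivWithinAt_id x _) (iteratedHolderOn_const k 1)

theorem mul (hα : α ≤ 1) (hu : IteratedHolderOn k α u (Icc a b))
    (hv : IteratedHolderOn k α v (Icc a b)) :
    IteratedHolderOn k α (fun x => u x * v x) (Icc a b) := by
  induction k generalizing u v with
  | zero =>
    obtain ⟨A, hA⟩ := isCompact_Icc.exists_bound_of_continuousOn hu.1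
    obtain ⟨B, hB⟩ := isCompact_Icc.exists_bound_of_continuousOn hv.1
    exact ⟨hu.1.mul hv.1, _, hu.2.choose_spec.mul hv.2.choose_spec
      (A := A.toNNReal) (fun x hx => (hA x hx).trans (Real.le_coe_toNNReal A))
      (B := B.toNNReal) (fun x hx => (hB x hx).trans (Real.le_coe_toNNReal B))⟩
  | succ k ih =>
    refine ⟨hu.1.mul hv.1, ((ih hu.2 (hv.of_succ hα)).add (ih (hu.of_succ hα) hv.2)).congr
      fun x hx => ?_⟩
    exact (derivWithin_mul (hu.1 x hx) (hv.1 x hx)).symm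

theorem inv (hα : α ≤ 1) {c : ℝ≥0} (hc : 0 < c)
    (hu : IteratedHolderOn k α u (Icc a b)) (hlb : ∀ x ∈ Icc a b, c ≤ |u x|) :
    IteratedHolderOn k α (fun x => (u x)⁻¹) (Icc a b) := by
  have hne : ∀ x ∈ Icc a b, u x ≠ 0 := fun x hx =>
    abs_pos.mp ((NNReal.coe_pos.mpr hc).trans_le (hlb x hx))
  induction k generalizing u with
  | zero => exact ⟨hu.1.inv₀ hne, _, hu.2.choose_spec.inv hc hlb⟩
  | succ k ih =>
    have hinv := ih (hu.of_succ hα) hlb hne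
    refine ⟨fun x hx => (hu.1 x hx).inv (hne x hx),
      ((hu.2.const_mul (-1)).mul hα (hinv.mul hα hinv)).congr fun x hx => ?_⟩
    change _ = derivWithin u⁻¹ _ x
    rw [derivWithin_inv' (hu.1 x hx) (hne x hx)]
    field_simp

theorem comp {a' b' : ℝ} (hα : α ≤ 1) {K : ℝ≥0} (hu : IteratedHolderOn k α u (Icc a b))
    (hv : IteratedHolderOn k α v (Icc a' b')) (hvK : LipschitzOnWith K v (Icc a' b'))
    (hmaps : MapsTo v (Icc a' b') (Icc a b)) :
    IteratedHolderOn k α (fun x => u (v x)) (Icc a' b') := by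
  induction k generalizing u v with
  | zero =>
    have hcomp := hu.2.choose_spec.comp (holderOnWith_one.mpr hvK) hmaps
    rw [mul_one] at hcomp
    exact ⟨hu.1.comp hv.1 hmaps, _, hcomp⟩
  | succ k ih =>
    refine ⟨fun x hx => (hu.1 _ (hmaps hx)).comp x (hv.1 x hx) hmaps,
      ((ih hu.2 (hv.of_succ hα) hvK hmaps).mul hα hv.2).congr fun x hx => ?_⟩
    exact (derivWithin_comp x (hu.1 _ (hmaps hx)) (hv.1 x hx) hmaps).symm

end IteratedHolderOn

theorem HasDerivWithinAt.of_local_left_inverse {𝕜 : Type*} [NontriviallyNormedField 𝕜]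
    {f g : 𝕜 → 𝕜} {f' a : 𝕜} {s t : Set 𝕜} (hg : Tendsto g (𝓝[s] a) (𝓝[t] (g a)))
    (hf : HasDerivWithinAt f f' t (g a)) (hf' : f' ≠ 0) (ha : a ∈ s)
    (hfg : ∀ᶠ y in 𝓝[s] a, f (g y) = y) : HasDerivWithinAt g f'⁻¹ s a :=
  HasFDerivWithinAt.of_local_left_inverse
    (f' := ContinuousLinearEquiv.unitsEquivAut 𝕜 (Units.mk0 f' hf')) hg hf ha hfg

theorem hasDerivWithinAt_integral_Icc {f : ℝ → ℝ} {a b x : ℝ} (hf : ContinuousOn f (Icc a b))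
    (hx : x ∈ Icc a b) : HasDerivWithinAt (fun u => ∫ t in a..u, f t) (f x) (Icc a b) x := by
  have : Fact (x ∈ Icc a b) := ⟨hx⟩
  exact integral_hasDerivWithinAt_right
    ((hf.mono (Icc_subset_Icc_right hx.2)).intervalIntegrable_of_Icc hx.1)
    (hf.stronglyMeasurableAtFilter_nhdsWithin measurableSet_Icc x) (hf x hx)

section InverseOfIncreasing

variable {φ φ' : ℝ → ℝ} {a b : ℝ}

theorem mul_sub_le_image_sub_of_le_hasDerivWithinAt_Icc {c : ℝ}
    (hφ : ∀ x ∈ Icc a b, HasDerivWithinAt φ (φ' x) (Icc a b) x) (hc : ∀ x ∈ Icc a b, c ≤ φ' x)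
    {x y : ℝ} (hx : x ∈ Icc a b) (hy : y ∈ Icc a b) (hxy : x ≤ y) : c * (y - x) ≤ φ y - φ x := by
  refine (convex_Icc a b).mul_sub_le_image_sub_of_le_deriv
    (fun z hz => (hφ z hz).continuousWithinAt) (fun z hz => ?_) (fun z hz => ?_) x hx y hy hxy
  all_goals
    rw [interior_Icc] at hz
    have hderiv := (hφ z (Ioo_subset_Icc_self hz)).hasDerivAt (Icc_mem_nhds hz.1 hz.2)
  · exact hderiv.differentiableAt.differentiableWithinAt
  · exact hderiv.deriv ▸ hc z (Ioo_subset_Icc_self hz)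

theorem mul_abs_sub_le_abs_image_sub_of_le_hasDerivWithinAt_Icc {c : ℝ≥0}
    (hφ : ∀ x ∈ Icc a b, HasDerivWithinAt φ (φ' x) (Icc a b) x) (hc : ∀ x ∈ Icc a b, c ≤ φ' x)
    {x y : ℝ} (hx : x ∈ Icc a b) (hy : y ∈ Icc a b) : c * |x - y| ≤ |φ x - φ y| := by
  rcases le_total x y with hxy | hxy
  · rw [abs_sub_comm x, abs_sub_comm (φ x), abs_of_nonneg (sub_nonneg.2 hxy)]
    exact (mul_sub_le_image_sub_of_le_hasDerivWithinAt_Icc hφ hc hx hy hxy).trans (le_abs_self _)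
  · rw [abs_of_nonneg (sub_nonneg.2 hxy)]
    exact (mul_sub_le_image_sub_of_le_hasDerivWithinAt_Icc hφ hc hy hx hxy).trans (le_abs_self _)

theorem lipschitzOnWith_invFunOn_Icc (hab : a ≤ b) {c : ℝ≥0} (hc : 0 < c)
    (hφ : ∀ x ∈ Icc a b, HasDerivWithinAt φ (φ' x) (Icc a b) x) (hlb : ∀ x ∈ Icc a b, c ≤ φ' x) :
    LipschitzOnWith c⁻¹ (Function.invFunOn φ (Icc a b)) (Icc (φ a) (φ b)) := by
  have hsurj : SurjOn φ (Icc a b) (Icc (φ a) (φ b)) :=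
    intermediate_value_Icc hab fun x hx => (hφ x hx).continuousWithinAt
  refine .of_dist_le_mul fun y hy y' hy' => ?_
  have key := mul_abs_sub_le_abs_image_sub_of_le_hasDerivWithinAt_Icc hφ hlb
    (hsurj.mapsTo_invFunOn hy) (hsurj.mapsTo_invFunOn hy')
  rw [hsurj.rightInvOn_invFunOn hy, hsurj.rightInvOn_invFunOn hy'] at key
  rw [Real.dist_eq, Real.dist_eq, NNReal.coe_inv, inv_mul_eq_div,
    le_div_iff₀ (NNReal.coe_pos.mpr hc)]
  linarith

theorem hasDerivWithinAt_invFunOn_Icc (hab : a ≤ b) {c : ℝ≥0} (hc : 0 < c)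
    (hφ : ∀ x ∈ Icc a b, HasDerivWithinAt φ (φ' x) (Icc a b) x) (hlb : ∀ x ∈ Icc a b, c ≤ φ' x)
    {y : ℝ} (hy : y ∈ Icc (φ a) (φ b)) :
    HasDerivWithinAt (Function.invFunOn φ (Icc a b)) (φ' (Function.invFunOn φ (Icc a b) y))⁻¹
      (Icc (φ a) (φ b)) y := by
  have hsurj : SurjOn φ (Icc a b) (Icc (φ a) (φ b)) :=
    intermediate_value_Icc hab fun x hx => (hφ x hx).continuousWithinAt
  have hx := hsurj.mapsTo_invFunOn hy
  refine .of_local_left_inverse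
    (((lipschitzOnWith_invFunOn_Icc hab hc hφ hlb).continuousOn y hy).tendsto_nhdsWithin
      hsurj.mapsTo_invFunOn) (hφ _ hx) ?_ hy
    (eventually_nhdsWithin_of_forall fun _ hy' => hsurj.rightInvOn_invFunOn hy')
  exact ((NNReal.coe_pos.mpr hc).trans_le (hlb _ hx)).ne'

theorem IteratedHolderOn.invFunOn_Icc {k : ℕ} {α : ℝ≥0} (hα : α ≤ 1) (hab : a < b) {c : ℝ≥0}
    (hc : 0 < c) (hφ : ∀ x ∈ Icc a b, HasDerivWithinAt φ (φ' x) (Icc a b) x)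
    (hφ' : IteratedHolderOn k α φ' (Icc a b)) (hlb : ∀ x ∈ Icc a b, c ≤ φ' x) :
    IteratedHolderOn (k + 1) α (Function.invFunOn φ (Icc a b)) (Icc (φ a) (φ b)) := by
  set ψ := Function.invFunOn φ (Icc a b)
  have hmaps : MapsTo ψ (Icc (φ a) (φ b)) (Icc a b) :=
    SurjOn.mapsTo_invFunOn <| intermediate_value_Icc hab.le fun x hx => (hφ x hx).continuousWithinAt
  have hlip := lipschitzOnWith_invFunOn_Icc hab.le hc hφ hlb
  have hderiv := fun y (hy : y ∈ Icc (φ a) (φ b)) =>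
    hasDerivWithinAt_invFunOn_Icc hab.le hc hφ hlb hy
  have hφab : φ a < φ b := by
    nlinarith [mul_sub_le_image_sub_of_le_hasDerivWithinAt_Icc hφ hlb (left_mem_Icc.2 hab.le)
      (right_mem_Icc.2 hab.le) hab.le, NNReal.coe_pos.mpr hc]
  suffices ∀ j ≤ k + 1, IteratedHolderOn j α ψ (Icc (φ a) (φ b)) from this _ le_rfl
  intro j hj
  induction j with
  | zero => exact ⟨hlip.continuousOn, hlip.holderOnWith_Icc hα⟩
  | succ j ih =>
    have hφ'ψ := (hφ'.of_le hα (Nat.le_of_lt_succ hj)).comp hα (ih (by omega)) hlip hmaps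
    exact .of_hasDerivWithinAt (uniqueDiffOn_Icc hφab) hderiv
      (hφ'ψ.inv hα hc fun y hy => (hlb _ (hmaps hy)).trans (le_abs_self _))

end InverseOfIncreasing

theorem adjoint_source_smoothing_1D_general
    (p q : ℝ) (hpq : p < q) (k : ℕ) (α : NNReal) (hα1 : (α : ℝ) < 1)
    (f g : ℝ → ℝ)
    (hf_pos : ∀ x ∈ Set.Icc p q, 0 < f x) (hg_pos : ∀ x ∈ Set.Icc p q, 0 < g x)
    (hf_prob : ∫ x in Set.Icc p q, f x = 1) (hg_prob : ∫ x in Set.Icc p q, g x = 1)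
    (hf_reg : CkHolderOn k α f (Set.Icc p q)) (hg_reg : CkHolderOn k α g (Set.Icc p q))
    (F G : ℝ → ℝ)
    (hF : ∀ x, F x = ∫ t in p..x, f t) (hG : ∀ x, G x = ∫ t in p..x, g t)
    (T : ℝ → ℝ) (hT : ∀ x, T x = Function.invFunOn G (Set.Icc p q) (F x))
    (H : ℝ → ℝ)
    (hH_diff : ∀ t ∈ Set.Icc p q, DifferentiableWithinAt ℝ H (Set.Icc p q) t)
    (hH : ∀ t ∈ Set.Icc p q, derivWithin H (Set.Icc p q) t = 2 * (t - T t)) :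
    CkHolderOn (k + 2) α H (Set.Icc p q) := by
  have hα : α ≤ 1 := by exact_mod_cast hα1.le
  have hIcc := uniqueDiffOn_Icc hpq
  have hf := (IteratedHolderOn.iff_ckHolderOn hIcc).mpr hf_reg
  have hg := (IteratedHolderOn.iff_ckHolderOn hIcc).mpr hg_reg
  have hF' : ∀ x ∈ Icc p q, HasDerivWithinAt F (f x) (Icc p q) x :=
    funext hF ▸ fun x hx => hasDerivWithinAt_integral_Icc hf.continuousOn hx
  have hG' : ∀ x ∈ Icc p q, HasDerivWithinAt G (g x) (Icc p q) x :=
    funext hG ▸ fun x hx => hasDerivWithinAt_integral_Icc hg.continuousOn hx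
  have hF_ends : F p = 0 ∧ F q = 1 := by
    simp [hF, integral_of_le hpq.le, ← integral_Icc_eq_integral_Ioc, hf_prob]
  have hG_ends : G p = 0 ∧ G q = 1 := by
    simp [hG, integral_of_le hpq.le, ← integral_Icc_eq_integral_Ioc, hg_prob]
  obtain ⟨z, hz, hg_min⟩ := isCompact_Icc.exists_isMinOn (nonempty_Icc.2 hpq.le) hg.continuousOn
  have hGinv := hg.invFunOn_Icc hα hpq (c := ⟨g z, (hg_pos z hz).le⟩) (hg_pos z hz) hG' hg_min
  rw [hG_ends.1, hG_ends.2] at hGinv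
  have hF_mono : MonotoneOn F (Icc p q) := fun x hx y hy hxy => by
    have := mul_sub_le_image_sub_of_le_hasDerivWithinAt_Icc hF' (fun t ht => (hf_pos t ht).le)
      hx hy hxy
    linarith
  have hF_maps : MapsTo F (Icc p q) (Icc 0 1) := fun x hx =>
    ⟨hF_ends.1 ▸ hF_mono (left_mem_Icc.2 hpq.le) hx hx.1,
      hF_ends.2 ▸ hF_mono hx (right_mem_Icc.2 hpq.le) hx.2⟩
  have hF_reg := IteratedHolderOn.of_hasDerivWithinAt hIcc hF' hf
  have hT_reg : IteratedHolderOn (k + 1) α T (Icc p q) := funext hT ▸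
    hGinv.comp hα hF_reg hF_reg.exists_lipschitzOnWith.choose_spec hF_maps
  refine (IteratedHolderOn.iff_ckHolderOn hIcc).mp ⟨hH_diff, ?_⟩
  exact (((iteratedHolderOn_id hα hpq _).add (hT_reg.const_mul (-1))).const_mul 2).congr
    fun t ht => by rw [hH t ht]; ring

/-- for strictly positive `C^{k,α}` probability densities `f, g` on a
bounded interval with optimal map `T = G⁻¹ ∘ F`, the Fréchet derivative `H` of
`W₂²(·,g)` at `f`, characterized by `H' = 2(t − T(t))`, belongs to `C^{k+2,α}`. -/
theorem adjoint_source_smoothing_1D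
    (p q : ℝ) (hpq : p < q) (k : ℕ) (α : NNReal) (hα : 0 < (α : ℝ)) (hα1 : (α : ℝ) < 1)
    (f g : ℝ → ℝ) (hf_meas : Measurable f) (hg_meas : Measurable g)
    (hf_pos : ∀ x ∈ Set.Icc p q, 0 < f x) (hg_pos : ∀ x ∈ Set.Icc p q, 0 < g x)
    (hf_prob : ∫ x in Set.Icc p q, f x = 1) (hg_prob : ∫ x in Set.Icc p q, g x = 1)
    (hf_reg : CkHolderOn k α f (Set.Icc p q)) (hg_reg : CkHolderOn k α g (Set.Icc p q))
    (F G : ℝ → ℝ)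
    (hF : ∀ x, F x = ∫ t in p..x, f t) (hG : ∀ x, G x = ∫ t in p..x, g t)
    (T : ℝ → ℝ) (hT : ∀ x, T x = Function.invFunOn G (Set.Icc p q) (F x))
    (H : ℝ → ℝ)
    (hH_diff : ∀ t ∈ Set.Icc p q, DifferentiableWithinAt ℝ H (Set.Icc p q) t)
    (hH : ∀ t ∈ Set.Icc p q, derivWithin H (Set.Icc p q) t = 2 * (t - T t)) :
    CkHolderOn (k + 2) α H (Set.Icc p q) :=
  adjoint_source_smoothing_1D_general p q hpq k α hα1 f g hf_pos hg_pos hf_prob hg_prob hf_reg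
    hg_reg F G hF hG T hT H hH_diff hH
end
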